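/- arXiv:2501.10495 — 9 statements merged into one kernel-verified Lean document; each statement's English description precedes it below -/
import Mathlib

section
/- Let θ be a coherent action of a Lie triple system (𝕃,[·,·,·]) on another Lie triple system (𝕃',[·,·,·]'). Then 𝕃 ⊕ 𝕃' with the trilinear bracket [(a,u),(b,v),(c,w)]_⋉ := ([a,b,c], D_θ(a,b)w + [u,v,w]') is a 3-Leibniz algebra, i.e. this bracket satisfies the fundamental identity [s,t,[u,v,w]_⋉]_⋉ = [[s,t,u]_⋉,v,w]_⋉ + [u,[s,t,v]_⋉,w]_⋉ + [u,v,[s,t,w]_⋉]_⋉ for all s,t,u,v,w ∈ 𝕃 ⊕ 𝕃' (the nonabelian hemisemidirect product). -/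
/-- A Lie triple system structure on a `k`-vector space `L`. -/
structure IsLTS (k : Type*) {L : Type*} [Field k] [AddCommGroup L] [Module k L]
    (t : L → L → L → L) : Prop where
  lin₁ : ∀ y z, IsLinearMap k fun x => t x y z
  lin₂ : ∀ x z, IsLinearMap k fun y => t x y z
  lin₃ : ∀ x y, IsLinearMap k fun z => t x y z
  skew : ∀ x y z, t x y z = - t y x z
  cyclic : ∀ x y z, t x y z + t z x y + t y z x = 0
  fund : ∀ a b x y z, t a b (t x y z)
      = t (t a b x) y z + t x (t a b y) z + t x y (t a b z)

/-- A representation of a Lie triple system `(L, t)` on a vector space `V`,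
where `D_θ(x,y) = θ(y,x) - θ(x,y)`. -/
structure IsLTSRep (k : Type*) {L V : Type*} [Field k] [AddCommGroup L] [Module k L]
    [AddCommGroup V] [Module k V] (t : L → L → L → L) (θ : L → L → V →ₗ[k] V) : Prop where
  linθ₁ : ∀ y, IsLinearMap k fun x => θ x y
  linθ₂ : ∀ x, IsLinearMap k fun y => θ x y
  rep₁ : ∀ a b x y u, θ a b (θ x y u) - θ y b (θ x a u) - θ x (t y a b) u
      + (θ a y (θ x b u) - θ y a (θ x b u)) = 0
  rep₂ : ∀ a b x y u, θ a b (θ y x u - θ x y u) - (θ y x (θ a b u) - θ x y (θ a b u))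
      + θ (t x y a) b u + θ a (t x y b) u = 0

/-- A coherent action of a Lie triple system `(L, t)` on a Lie triple system `(L', t')`:
a representation of `L` on the underlying space of `L'` such that each `θ x y` takes
values in the center of `L'`, annihilates triple brackets, and is moreover a derivation
of the triple bracket of `L'`. -/
structure IsCoherentAction (k : Type*) {L L' : Type*} [Field k] [AddCommGroup L] [Module k L]
    [AddCommGroup L'] [Module k L'] (t : L → L → L → L) (t' : L' → L' → L' → L')
    (θ : L → L → L' →ₗ[k] L') extends IsLTSRep k t θ : Prop where
  central : ∀ x y u v w, t' (θ x y u) v w = 0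
  annih : ∀ x y u v w, θ x y (t' u v w) = 0
  deriv : ∀ x y u v w, θ x y (t' u v w)
      = t' (θ x y u) v w + t' u (θ x y v) w + t' u v (θ x y w)

/-- A nonabelian embedding tensor from the Lie triple system `(L', t')` to the Lie
triple system `(L, t)` with respect to the coherent action `θ`: a linear map `T` with
`[Tu,Tv,Tw] = T (D_θ(Tu,Tv) w + [u,v,w]')`, where `D_θ(x,y) = θ(y,x) - θ(x,y)`. -/
def IsNET (k : Type*) {L L' : Type*} [Field k] [AddCommGroup L] [Module k L]
    [AddCommGroup L'] [Module k L'] (t : L → L → L → L) (t' : L' → L' → L' → L')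
    (θ : L → L → L' →ₗ[k] L') (T : L' →ₗ[k] L) : Prop :=
  ∀ u v w, t (T u) (T v) (T w) = T (θ (T v) (T u) w - θ (T u) (T v) w + t' u v w)

/-- the nonabelian hemisemidirect product. Given a coherent action `θ` of
`(𝕃,t)` on `(𝕃',t')`, the bracket
`[(a,u),(b,v),(c,w)] := ([a,b,c], D_θ(a,b)w + [u,v,w]')` on `𝕃 ⊕ 𝕃'` satisfies the
fundamental identity of a 3-Leibniz algebra. -/
theorem hemisemidirect_is_threeLeibniz {k L L' : Type*} [Field k] [CharZero k]
    [AddCommGroup L] [Module k L] [AddCommGroup L'] [Module k L']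
    (t : L → L → L → L) (t' : L' → L' → L' → L') (θ : L → L → L' →ₗ[k] L')
    (hL : IsLTS k t) (hL' : IsLTS k t') (hθ : IsCoherentAction k t t' θ)
    (br : L × L' → L × L' → L × L' → L × L')
    (hbr : ∀ p q r : L × L',
      br p q r = (t p.1 q.1 r.1, θ q.1 p.1 r.2 - θ p.1 q.1 r.2 + t' p.2 q.2 r.2)) :
    ∀ s r u v w : L × L',
      br s r (br u v w)
        = br (br s r u) v w + br u (br s r v) w + br u v (br s r w) := by
  intro s r u v w
  have z1 : ∀ x y c a b, t' (θ x y c) a b = 0 := hθ.central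
  have z2 : ∀ x y c a b, t' a (θ x y c) b = 0 := by
    intro x y c a b; rw [hL'.skew, z1, neg_zero]
  have z3 : ∀ x y c a b, t' a b (θ x y c) = 0 := by
    intro x y c a b
    have h := hL'.cyclic a b (θ x y c)
    rw [z1, z2] at h
    simpa using h
  have ta : ∀ (a b c d : L'), t' (a + b) c d = t' a c d + t' b c d :=
    fun a b c d => (hL'.lin₁ c d).map_add a b
  have tsa : ∀ (a b c d : L'), t' (a - b) c d = t' a c d - t' b c d :=
    fun a b c d => (hL'.lin₁ c d).map_sub a b
  have tb : ∀ (a b c d : L'), t' c (a + b) d = t' c a d + t' c b d :=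
    fun a b c d => (hL'.lin₂ c d).map_add a b
  have tsb : ∀ (a b c d : L'), t' c (a - b) d = t' c a d - t' c b d :=
    fun a b c d => (hL'.lin₂ c d).map_sub a b
  have tc : ∀ (a b c d : L'), t' c d (a + b) = t' c d a + t' c d b :=
    fun a b c d => (hL'.lin₃ c d).map_add a b
  have tsc : ∀ (a b c d : L'), t' c d (a - b) = t' c d a - t' c d b :=
    fun a b c d => (hL'.lin₃ c d).map_sub a b
  have hA := hθ.rep₂ u.1 v.1 s.1 r.1 w.2
  have hB := hθ.rep₂ v.1 u.1 s.1 r.1 w.2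
  have hF := hL'.fund s.2 r.2 u.2 v.2 w.2
  simp only [map_sub, map_add] at hA hB ⊢
  simp only [hbr, Prod.mk_add_mk, Prod.mk.injEq, map_sub, map_add,
    ta, tsa, tb, tsb, tc, tsc, z1, z2, z3, hθ.annih,
    zero_add, add_zero, sub_zero, zero_sub]
  refine ⟨hL.fund s.1 r.1 u.1 v.1 w.1, ?_⟩
  linear_combination (norm := abel) hA - hB + hF
end

section
/- Let T: 𝕃' → 𝕃 be a nonabelian embedding tensor from a Lie triple system (𝕃',[·,·,·]') to a Lie triple system (𝕃,[·,·,·]) with respect to a coherent action θ. Let f: 𝕃 → 𝕃 and f': 𝕃' → 𝕃' be bijective Lie triple system homomorphisms (isomorphisms) such that f'(θ(x,y)u) = θ(f(x),f(y))f'(u) and f'(D_θ(x,y)u) = D_θ(f(x),f(y))f'(u) for all x,y ∈ 𝕃, u ∈ 𝕃'. Then f⁻¹ ∘ T ∘ f' is again a nonabelian embedding tensor from 𝕃' to 𝕃 with respect to θ. -/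
/-- if `T` is a nonabelian embedding tensor from `(𝕃',t')` to `(𝕃,t)` with
respect to a coherent action `θ`, and `f, f'` are Lie triple system isomorphisms of `𝕃`
and `𝕃'` intertwining `θ` and `D_θ`, then `f⁻¹ ∘ T ∘ f'` is again a nonabelian
embedding tensor with respect to `θ`. -/
theorem conjugate_isNET {k L L' : Type*} [Field k] [CharZero k]
    [AddCommGroup L] [Module k L] [AddCommGroup L'] [Module k L']
    (t : L → L → L → L) (t' : L' → L' → L' → L') (θ : L → L → L' →ₗ[k] L')
    (hL : IsLTS k t) (hL' : IsLTS k t') (hθ : IsCoherentAction k t t' θ)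
    (T : L' →ₗ[k] L) (hT : IsNET k t t' θ T)
    (f : L ≃ₗ[k] L) (f' : L' ≃ₗ[k] L')
    (hf : ∀ x y z : L, f (t x y z) = t (f x) (f y) (f z))
    (hf' : ∀ u v w : L', f' (t' u v w) = t' (f' u) (f' v) (f' w))
    (hθf : ∀ (x y : L) (u : L'), f' (θ x y u) = θ (f x) (f y) (f' u))
    (hDf : ∀ (x y : L) (u : L'),
      f' (θ y x u - θ x y u) = θ (f y) (f x) (f' u) - θ (f x) (f y) (f' u)) :
    IsNET k t t' θ ((f.symm.toLinearMap ∘ₗ T) ∘ₗ f'.toLinearMap) := by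
  intro u v w
  apply f.injective
  simp only [LinearMap.comp_apply, LinearEquiv.coe_coe, LinearEquiv.apply_symm_apply]
  rw [hf]
  simp only [LinearEquiv.apply_symm_apply]
  rw [hT (f' u) (f' v) (f' w)]
  congr 1
  have h1 : f' (θ (f.symm (T (f' v))) (f.symm (T (f' u))) w)
      = θ (T (f' v)) (T (f' u)) (f' w) := by
    rw [hθf]; simp
  have h2 : f' (θ (f.symm (T (f' u))) (f.symm (T (f' v))) w)
      = θ (T (f' u)) (T (f' v)) (f' w) := by
    rw [hθf]; simp
  rw [map_add, map_sub, h1, h2, hf']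
end

section
/- Let T: 𝕃' → 𝕃 be a nonabelian embedding tensor from a Lie triple system (𝕃',[·,·,·]') to a Lie triple system (𝕃,[·,·,·]) with respect to a coherent action θ. Define [u,v,w]_T := D_θ(Tu,Tv)w + [u,v,w]' for u,v,w ∈ 𝕃'. Then (𝕃',[·,·,·]_T) is a 3-Leibniz algebra (satisfying the fundamental identity), and T is a homomorphism from (𝕃',[·,·,·]_T) to (𝕃,[·,·,·]), i.e. T([u,v,w]_T) = [Tu,Tv,Tw] for all u,v,w ∈ 𝕃'. -/
/-- the descendent bracket `[u,v,w]_T := D_θ(Tu,Tv)w + [u,v,w]'` of a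
nonabelian embedding tensor `T` makes `𝕃'` a 3-Leibniz algebra, and `T` is a
homomorphism from `(𝕃',[·,·,·]_T)` to `(𝕃,[·,·,·])`. -/
theorem descendent_threeLeibniz {k L L' : Type*} [Field k] [CharZero k]
    [AddCommGroup L] [Module k L] [AddCommGroup L'] [Module k L']
    (t : L → L → L → L) (t' : L' → L' → L' → L') (θ : L → L → L' →ₗ[k] L')
    (hL : IsLTS k t) (hL' : IsLTS k t') (hθ : IsCoherentAction k t t' θ)
    (T : L' →ₗ[k] L) (hT : IsNET k t t' θ T)
    (bT : L' → L' → L' → L')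
    (hbT : ∀ u v w : L', bT u v w = θ (T v) (T u) w - θ (T u) (T v) w + t' u v w) :
    (∀ s r u v w : L',
      bT s r (bT u v w) = bT (bT s r u) v w + bT u (bT s r v) w + bT u v (bT s r w)) ∧
    (∀ u v w : L', T (bT u v w) = t (T u) (T v) (T w)) := by
  have hom : ∀ u v w : L', T (bT u v w) = t (T u) (T v) (T w) := by
    intro u v w
    rw [hbT]
    exact (hT u v w).symm
  refine ⟨?_, hom⟩
  intro s r u v w
  have hc1 : ∀ x y u v w, t' (θ x y u) v w = 0 := hθ.central
  have hc2 : ∀ x y u v w, t' u (θ x y v) w = 0 := by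
    intro x y u v w
    rw [hL'.skew, hc1, neg_zero]
  have hc3 : ∀ x y u v w, t' u v (θ x y w) = 0 := by
    intro x y u v w
    have h := hL'.cyclic u v (θ x y w)
    rw [hc1, hc2] at h
    simpa using h
  have t'add₁ : ∀ p q v w, t' (p + q) v w = t' p v w + t' q v w :=
    fun p q v w => (hL'.lin₁ v w).map_add p q
  have t'sub₁ : ∀ p q v w, t' (p - q) v w = t' p v w - t' q v w := by
    intro p q v w
    have := (hL'.lin₁ v w).map_neg q
    rw [sub_eq_add_neg, t'add₁, this, ← sub_eq_add_neg]
  have t'add₂ : ∀ u p q w, t' u (p + q) w = t' u p w + t' u q w :=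
    fun u p q w => (hL'.lin₂ u w).map_add p q
  have t'sub₂ : ∀ u p q w, t' u (p - q) w = t' u p w - t' u q w := by
    intro u p q w
    have := (hL'.lin₂ u w).map_neg q
    rw [sub_eq_add_neg, t'add₂, this, ← sub_eq_add_neg]
  have t'add₃ : ∀ u v p q, t' u v (p + q) = t' u v p + t' u v q :=
    fun u v p q => (hL'.lin₃ u v).map_add p q
  have t'sub₃ : ∀ u v p q, t' u v (p - q) = t' u v p - t' u v q := by
    intro u v p q
    have := (hL'.lin₃ u v).map_neg q
    rw [sub_eq_add_neg, t'add₃, this, ← sub_eq_add_neg]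
  rw [hbT s r (bT u v w), hbT (bT s r u) v w, hbT u (bT s r v) w, hbT u v (bT s r w),
    hom s r u, hom s r v, hbT u v w, hbT s r u, hbT s r v, hbT s r w]
  simp only [map_sub, map_add, t'add₁, t'sub₁, t'add₂, t'sub₂, t'add₃, t'sub₃,
    hθ.annih, hc1, hc2, hc3, add_zero, zero_add, sub_zero, zero_sub, neg_zero]
  have E1 := hθ.rep₂ (T u) (T v) (T s) (T r) w
  have E2 := hθ.rep₂ (T v) (T u) (T s) (T r) w
  simp only [map_sub] at E1 E2
  linear_combination (norm := abel) E1 - E2 + hL'.fund s r u v w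
end

section
/- Let T: 𝕃' → 𝕃 be a nonabelian embedding tensor from a Lie triple system (𝕃',[·,·,·]') to a Lie triple system (𝕃,[·,·,·]) with respect to a coherent action θ. Define ρ^l_T(u,v,x) := [Tu,Tv,x], ρ^m_T(u,x,v) := [Tu,x,Tv] - T(D_θ(Tu,x)v), and ρ^r_T(x,u,v) := [x,Tu,Tv] - T(D_θ(x,Tu)v) for u,v ∈ 𝕃', x ∈ 𝕃. Then (𝕃; ρ^l_T, ρ^m_T, ρ^r_T) is a representation of the descendent 3-Leibniz algebra (𝕃',[·,·,·]_T), i.e. all five representation identities hold with the bracket [·,·,·]_T. -/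
section Helpers
variable {k L L' : Type*} [Field k] [AddCommGroup L] [Module k L]
  [AddCommGroup L'] [Module k L']
  {t : L → L → L → L} {t' : L' → L' → L' → L'} {θ : L → L → L' →ₗ[k] L'}

theorem IsLTS.sub₁ (hL : IsLTS k t) (x y a b : L) :
    t (x - y) a b = t x a b - t y a b := by
  have h := (hL.lin₁ a b).map_sub x y; simpa using h

theorem IsLTS.sub₂ (hL : IsLTS k t) (x y a b : L) :
    t a (x - y) b = t a x b - t a y b := by
  have h := (hL.lin₂ a b).map_sub x y; simpa using h

theorem IsLTS.sub₃ (hL : IsLTS k t) (x y a b : L) :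
    t a b (x - y) = t a b x - t a b y := by
  have h := (hL.lin₃ a b).map_sub x y; simpa using h

theorem IsLTS.add₁ (hL : IsLTS k t) (x y a b : L) :
    t (x + y) a b = t x a b + t y a b := by
  have h := (hL.lin₁ a b).map_add x y; simpa using h

theorem IsLTS.add₂ (hL : IsLTS k t) (x y a b : L) :
    t a (x + y) b = t a x b + t a y b := by
  have h := (hL.lin₂ a b).map_add x y; simpa using h

theorem IsLTS.add₃ (hL : IsLTS k t) (x y a b : L) :
    t a b (x + y) = t a b x + t a b y := by
  have h := (hL.lin₃ a b).map_add x y; simpa using h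

theorem IsLTSRep.sub₁ (h : IsLTSRep k t θ) (x y p : L) (c : L') :
    θ (x - y) p c = θ x p c - θ y p c := by
  rw [show θ (x - y) p = θ x p - θ y p from (h.linθ₁ p).map_sub x y, LinearMap.sub_apply]

theorem IsLTSRep.add₁ (h : IsLTSRep k t θ) (x y p : L) (c : L') :
    θ (x + y) p c = θ x p c + θ y p c := by
  rw [show θ (x + y) p = θ x p + θ y p from (h.linθ₁ p).map_add x y, LinearMap.add_apply]

theorem IsLTSRep.sub₂ (h : IsLTSRep k t θ) (x y p : L) (c : L') :
    θ p (x - y) c = θ p x c - θ p y c := by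
  rw [show θ p (x - y) = θ p x - θ p y from (h.linθ₂ p).map_sub x y, LinearMap.sub_apply]

theorem IsLTSRep.add₂ (h : IsLTSRep k t θ) (x y p : L) (c : L') :
    θ p (x + y) c = θ p x c + θ p y c := by
  rw [show θ p (x + y) = θ p x + θ p y from (h.linθ₂ p).map_add x y, LinearMap.add_apply]

/-- the center-valuedness kills brackets with a `θ`-image in the third slot too. -/
theorem IsCoherentAction.central₃ (hL' : IsLTS k t') (hθ : IsCoherentAction k t t' θ)
    (x y : L) (u v c : L') : t' u v (θ x y c) = 0 := by
  have h := hθ.deriv x y u v c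
  rw [hθ.annih, hθ.central, hL'.skew u (θ x y v) c, hθ.central] at h
  simpa using h.symm

/-- `T` applied to the second representation identity. -/
theorem aux_TR2 (hθ : IsLTSRep k t θ) (T : L' →ₗ[k] L) (a b x y : L) (u : L') :
    T (θ a b (θ y x u)) - T (θ a b (θ x y u)) - T (θ y x (θ a b u))
      + T (θ x y (θ a b u)) + T (θ (t x y a) b u) + T (θ a (t x y b) u) = 0 := by
  have h := congrArg T (hθ.rep₂ a b x y u)
  simp only [map_sub, map_add, map_zero] at h
  linear_combination (norm := abel) h

end Helpers

/-- a nonabelian embedding tensor `T` induces a representation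
`(𝕃; ρ^l_T, ρ^m_T, ρ^r_T)` of the descendent 3-Leibniz algebra `(𝕃',[·,·,·]_T)`,
where `ρ^l_T(u,v,x) = [Tu,Tv,x]`, `ρ^m_T(u,x,v) = [Tu,x,Tv] - T(D_θ(Tu,x)v)` and
`ρ^r_T(x,u,v) = [x,Tu,Tv] - T(D_θ(x,Tu)v)`. -/
theorem descendent_representation {k L L' : Type*} [Field k] [CharZero k]
    [AddCommGroup L] [Module k L] [AddCommGroup L'] [Module k L']
    (t : L → L → L → L) (t' : L' → L' → L' → L') (θ : L → L → L' →ₗ[k] L')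
    (hL : IsLTS k t) (hL' : IsLTS k t') (hθ : IsCoherentAction k t t' θ)
    (T : L' →ₗ[k] L) (hT : IsNET k t t' θ T)
    (bT : L' → L' → L' → L')
    (hbT : ∀ u v w : L', bT u v w = θ (T v) (T u) w - θ (T u) (T v) w + t' u v w)
    (ρl : L' → L' → L → L) (ρm : L' → L → L' → L) (ρr : L → L' → L' → L)
    (hρl : ∀ (u v : L') (x : L), ρl u v x = t (T u) (T v) x)
    (hρm : ∀ (u v : L') (x : L),
      ρm u x v = t (T u) x (T v) - T (θ x (T u) v - θ (T u) x v))
    (hρr : ∀ (u v : L') (x : L),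
      ρr x u v = t x (T u) (T v) - T (θ (T u) x v - θ x (T u) v)) :
    (∀ (a b x y : L') (u : L),
      ρl a b (ρl x y u) = ρl (bT a b x) y u + ρl x (bT a b y) u + ρl x y (ρl a b u)) ∧
    (∀ (a b x z : L') (u : L),
      ρl a b (ρm x u z) = ρm (bT a b x) u z + ρm x (ρl a b u) z + ρm x u (bT a b z)) ∧
    (∀ (a b y z : L') (u : L),
      ρl a b (ρr u y z) = ρr (ρl a b u) y z + ρr u (bT a b y) z + ρr u y (bT a b z)) ∧
    (∀ (a x y z : L') (u : L),
      ρm a u (bT x y z) = ρr (ρm a u x) y z + ρm x (ρm a u y) z + ρl x y (ρm a u z)) ∧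
    (∀ (b x y z : L') (u : L),
      ρr u b (bT x y z) = ρr (ρr u b x) y z + ρm x (ρr u b y) z + ρl x y (ρr u b z)) := by
  have hT' : ∀ u v w, t (T u) (T v) (T w)
      = T (θ (T v) (T u) w - θ (T u) (T v) w + t' u v w) := hT
  have hrep := hθ.toIsLTSRep
  have hZ3 := hθ.central₃ hL'
  refine ⟨?_, ?_, ?_, ?_, ?_⟩
  · -- identity 1
    intro a b x y u
    simp only [hρl, hbT]
    simp only [← hT']
    exact hL.fund (T a) (T b) (T x) (T y) u
  · -- identity 2
    intro a b x z u
    simp only [hρl, hρm, hbT]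
    simp only [← hT']
    have n1 := hT' a b (θ u (T x) z)
    have n2 := hT' a b (θ (T x) u z)
    simp only [map_sub, map_add, hZ3, add_zero] at n1 n2
    have c1 := aux_TR2 hrep T u (T x) (T a) (T b) z
    have c2 := aux_TR2 hrep T (T x) u (T a) (T b) z
    have hf := hL.fund (T a) (T b) (T x) u (T z)
    simp only [map_sub, map_add, hL.sub₁, hL.sub₂, hL.sub₃, hL.add₁, hL.add₂, hL.add₃,
      hrep.sub₁, hrep.sub₂, hrep.add₁, hrep.add₂, hθ.annih, hθ.central, hZ3,
      map_zero, add_zero, zero_add, sub_zero, zero_sub]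
    linear_combination (norm := abel) hf - n1 + n2 + c1 - c2
  · -- identity 3
    intro a b y z u
    simp only [hρl, hρr, hbT]
    simp only [← hT']
    have n1 := hT' a b (θ (T y) u z)
    have n2 := hT' a b (θ u (T y) z)
    simp only [map_sub, map_add, hZ3, add_zero] at n1 n2
    have c1 := aux_TR2 hrep T (T y) u (T a) (T b) z
    have c2 := aux_TR2 hrep T u (T y) (T a) (T b) z
    have hf := hL.fund (T a) (T b) u (T y) (T z)
    simp only [map_sub, map_add, hL.sub₁, hL.sub₂, hL.sub₃, hL.add₁, hL.add₂, hL.add₃,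
      hrep.sub₁, hrep.sub₂, hrep.add₁, hrep.add₂, hθ.annih, hθ.central, hZ3,
      map_zero, add_zero, zero_add, sub_zero, zero_sub]
    linear_combination (norm := abel) hf - n1 + n2 + c1 - c2
  · -- identity 4
    intro a x y z u
    simp only [hρl, hρm, hρr, hbT]
    simp only [← hT']
    have n1 := hT' (θ u (T a) x) y z
    have n2 := hT' (θ (T a) u x) y z
    have n3 := hT' (θ u (T a) y) x z
    have n4 := hT' (θ (T a) u y) x z
    have n5 := hT' x y (θ u (T a) z)
    have n6 := hT' x y (θ (T a) u z)
    simp only [map_sub, map_add, hθ.central, hZ3, add_zero] at n1 n2 n3 n4 n5 n6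
    have s1 := hL.skew (T x) (T (θ u (T a) y)) (T z)
    have s2 := hL.skew (T x) (T (θ (T a) u y)) (T z)
    have c1 := aux_TR2 hrep T (T y) (T x) (T a) u z
    have c2 := aux_TR2 hrep T (T x) (T y) (T a) u z
    have hf := hL.fund (T a) u (T x) (T y) (T z)
    simp only [map_sub, map_add, hL.sub₁, hL.sub₂, hL.sub₃, hL.add₁, hL.add₂, hL.add₃,
      hrep.sub₁, hrep.sub₂, hrep.add₁, hrep.add₂, hθ.annih, hθ.central, hZ3,
      map_zero, add_zero, zero_add, sub_zero, zero_sub]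
    linear_combination (norm := abel) hf + n1 - n2 + s1 - n3 - s2 + n4 + n5 - n6 + c1 - c2
  · -- identity 5
    intro b x y z u
    simp only [hρl, hρm, hρr, hbT]
    simp only [← hT']
    have n1 := hT' (θ (T b) u x) y z
    have n2 := hT' (θ u (T b) x) y z
    have n3 := hT' (θ (T b) u y) x z
    have n4 := hT' (θ u (T b) y) x z
    have n5 := hT' x y (θ (T b) u z)
    have n6 := hT' x y (θ u (T b) z)
    simp only [map_sub, map_add, hθ.central, hZ3, add_zero] at n1 n2 n3 n4 n5 n6
    have s1 := hL.skew (T x) (T (θ (T b) u y)) (T z)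
    have s2 := hL.skew (T x) (T (θ u (T b) y)) (T z)
    have c1 := aux_TR2 hrep T (T y) (T x) u (T b) z
    have c2 := aux_TR2 hrep T (T x) (T y) u (T b) z
    have hf := hL.fund u (T b) (T x) (T y) (T z)
    simp only [map_sub, map_add, hL.sub₁, hL.sub₂, hL.sub₃, hL.add₁, hL.add₂, hL.add₃,
      hrep.sub₁, hrep.sub₂, hrep.add₁, hrep.add₂, hθ.annih, hθ.central, hZ3,
      map_zero, add_zero, zero_add, sub_zero, zero_sub]
    linear_combination (norm := abel) hf + n1 - n2 + s1 - n3 - s2 + n4 + n5 - n6 + c1 - c2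
end

section
/- Let T: 𝕃' → 𝕃 be a nonabelian embedding tensor from a Lie triple system (𝕃',[·,·,·]') to a Lie triple system (𝕃,[·,·,·]) with respect to a coherent action θ. For a,b ∈ 𝕃 define the 1-cochain ℑ(a,b): 𝕃' → 𝕃 by ℑ(a,b)u := T(D_θ(a,b)u) - [a,b,Tu]. Then ℑ(a,b) is a 1-cocycle: for all u,v,w ∈ 𝕃', writing f := ℑ(a,b), one has -f([u,v,w]_T) + [Tu,Tv,f(w)] + [Tu,f(v),Tw] - T(D_θ(Tu,f(v))w) + [f(u),Tv,Tw] - T(D_θ(f(u),Tv)w) = 0. Equivalently, the composition ∂¹_T ∘ ∂⁰_T of the coboundary operators is zero. -/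
/-- for a nonabelian embedding tensor `T` and `a, b ∈ 𝕃`, the 1-cochain
`ℑ(a,b) u := T(D_θ(a,b)u) - [a,b,Tu]` is a 1-cocycle, i.e. `∂¹_T(ℑ(a,b)) = 0`. -/
theorem zeroth_coboundary_is_cocycle {k L L' : Type*} [Field k] [CharZero k]
    [AddCommGroup L] [Module k L] [AddCommGroup L'] [Module k L']
    (t : L → L → L → L) (t' : L' → L' → L' → L') (θ : L → L → L' →ₗ[k] L')
    (hL : IsLTS k t) (hL' : IsLTS k t') (hθ : IsCoherentAction k t t' θ)
    (T : L' →ₗ[k] L) (hT : IsNET k t t' θ T) (a b : L)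
    (f : L' → L) (hf : ∀ u : L', f u = T (θ b a u - θ a b u) - t a b (T u)) :
    ∀ u v w : L',
      -f (θ (T v) (T u) w - θ (T u) (T v) w + t' u v w)
        + t (T u) (T v) (f w)
        + t (T u) (f v) (T w) - T (θ (f v) (T u) w - θ (T u) (f v) w)
        + t (f u) (T v) (T w) - T (θ (T v) (f u) w - θ (f u) (T v) w) = 0 := by
  obtain ⟨hrep, hcent, hann, hder⟩ := hθ
  have tsub₁ : ∀ p q y z, t (p - q) y z = t p y z - t q y z :=
    fun p q y z => (hL.lin₁ y z).map_sub p q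
  have tsub₂ : ∀ x p q z, t x (p - q) z = t x p z - t x q z :=
    fun x p q z => (hL.lin₂ x z).map_sub p q
  have tsub₃ : ∀ x y p q, t x y (p - q) = t x y p - t x y q :=
    fun x y p q => (hL.lin₃ x y).map_sub p q
  have θsub₁ : ∀ p q Y r, θ (p - q) Y r = θ p Y r - θ q Y r := by
    intro p q Y r
    rw [(hrep.linθ₁ Y).map_sub, LinearMap.sub_apply]
  have θsub₂ : ∀ X p q r, θ X (p - q) r = θ X p r - θ X q r := by
    intro X p q r
    rw [(hrep.linθ₂ X).map_sub, LinearMap.sub_apply]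
  have central' : ∀ x y p q r, t' p (θ x y q) r = 0 := by
    intro x y p q r
    rw [hL'.skew, hcent, neg_zero]
  have central'' : ∀ x y p q r, t' p q (θ x y r) = 0 := by
    intro x y p q r
    have hc := hL'.cyclic p q (θ x y r)
    rw [hcent, central'] at hc
    simpa using hc
  intro u v w
  simp only [hf]
  rw [← hT u v w, hL.fund a b (T u) (T v) (T w)]
  simp only [map_sub, map_add, hann, tsub₁, tsub₂, tsub₃, θsub₁, θsub₂, add_zero, sub_zero]
  rw [hT u v (θ b a w), hT u v (θ a b w), hT u (θ b a v) w, hT u (θ a b v) w,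
      hT (θ b a u) v w, hT (θ a b u) v w]
  simp only [central', central'', hcent, map_sub, map_add, map_zero, add_zero, sub_zero]
  have J1 := congrArg T (hrep.rep₂ (T u) (T v) a b w)
  have J2 := congrArg T (hrep.rep₂ (T v) (T u) a b w)
  have J3 := congrArg T (hrep.rep₂ a b (T u) (T v) w)
  have J4 := congrArg T (hrep.rep₂ b a (T u) (T v) w)
  simp only [map_sub, map_add, map_zero] at J1 J2 J3 J4
  have z := congrArg₂ (· - ·) J2 J1
  simp only [sub_zero, add_zero] at z
  conv_rhs => rw [← z]
  abel
end

section
/- Let T: 𝕃' → 𝕃 be a nonabelian embedding tensor from a Lie triple system (𝕃',[·,·,·]') to a Lie triple system (𝕃,[·,·,·]) with respect to a coherent action θ, and let T₁: 𝕃' → 𝕃 be a linear map. Then T + tT₁ is a nonabelian embedding tensor for every t ∈ k if and only if for all u,v,w ∈ 𝕃' the following three identities hold: (5.1) [Tu,Tv,T₁w] + [Tu,T₁v,Tw] + [T₁u,Tv,Tw] = T₁(D_θ(Tu,Tv)w + [u,v,w]') + T(D_θ(T₁u,Tv)w + D_θ(Tu,T₁v)w); (5.2) [Tu,T₁v,T₁w]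 + [T₁u,Tv,T₁w] + [T₁u,T₁v,Tw] = T(D_θ(T₁u,T₁v)w) + T₁(D_θ(T₁u,Tv)w + D_θ(Tu,T₁v)w); (5.3) [T₁u,T₁v,T₁w] = T₁(D_θ(T₁u,T₁v)w). -/
/-- If a cubic polynomial (with zero constant term) in `c` with module coefficients
vanishes for all scalars `c`, then all its coefficients vanish (char 0). -/
lemma cubic_coeffs_zero {k M : Type*} [Field k] [CharZero k] [AddCommGroup M] [Module k M]
    (A1 A2 A3 : M) (h : ∀ c : k, c • A1 + (c * c) • A2 + (c * c * c) • A3 = 0) :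
    A1 = 0 ∧ A2 = 0 ∧ A3 = 0 := by
  have e1 : (1 : k) • A1 + (1 : k) • A2 + (1 : k) • A3 = 0 := by
    have := h 1; linear_combination (norm := module) this
  have e2 : (-1 : k) • A1 + (1 : k) • A2 + (-1 : k) • A3 = 0 := by
    have := h (-1); linear_combination (norm := module) this
  have e3 : (2 : k) • A1 + (4 : k) • A2 + (8 : k) • A3 = 0 := by
    have := h 2; linear_combination (norm := module) this
  refine ⟨?_, ?_, ?_⟩
  · linear_combination (norm := module) e1 + (-(1/3 : k)) • e2 + (-(1/6 : k)) • e3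
  · linear_combination (norm := module) (1/2 : k) • e1 + (1/2 : k) • e2
  · linear_combination (norm := module) (-(1/2 : k)) • e1 + (-(1/6 : k)) • e2 + (1/6 : k) • e3

/-- `T + tT₁` is a nonabelian embedding tensor for every scalar `t` if and
only if the three deformation identities (5.1)–(5.3) hold. -/
theorem infinitesimal_deformation_iff {k L L' : Type*} [Field k] [CharZero k]
    [AddCommGroup L] [Module k L] [AddCommGroup L'] [Module k L']
    (t : L → L → L → L) (t' : L' → L' → L' → L') (θ : L → L → L' →ₗ[k] L')
    (hL : IsLTS k t) (hL' : IsLTS k t') (hθ : IsCoherentAction k t t' θ)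
    (T : L' →ₗ[k] L) (hT : IsNET k t t' θ T) (T₁ : L' →ₗ[k] L) :
    (∀ c : k, IsNET k t t' θ (T + c • T₁)) ↔
      ((∀ u v w : L',
        t (T u) (T v) (T₁ w) + t (T u) (T₁ v) (T w) + t (T₁ u) (T v) (T w)
          = T₁ (θ (T v) (T u) w - θ (T u) (T v) w + t' u v w)
            + T (θ (T v) (T₁ u) w - θ (T₁ u) (T v) w
                + (θ (T₁ v) (T u) w - θ (T u) (T₁ v) w))) ∧
      (∀ u v w : L',
        t (T u) (T₁ v) (T₁ w) + t (T₁ u) (T v) (T₁ w) + t (T₁ u) (T₁ v) (T w)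
          = T (θ (T₁ v) (T₁ u) w - θ (T₁ u) (T₁ v) w)
            + T₁ (θ (T v) (T₁ u) w - θ (T₁ u) (T v) w
                + (θ (T₁ v) (T u) w - θ (T u) (T₁ v) w))) ∧
      (∀ u v w : L',
        t (T₁ u) (T₁ v) (T₁ w) = T₁ (θ (T₁ v) (T₁ u) w - θ (T₁ u) (T₁ v) w))) := by
  have tadd1 : ∀ x x' y z, t (x + x') y z = t x y z + t x' y z :=
    fun x x' y z => (hL.lin₁ y z).map_add x x'
  have tsmul1 : ∀ (c : k) x y z, t (c • x) y z = c • t x y z :=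
    fun c x y z => (hL.lin₁ y z).map_smul c x
  have tadd2 : ∀ x y y' z, t x (y + y') z = t x y z + t x y' z :=
    fun x y y' z => (hL.lin₂ x z).map_add y y'
  have tsmul2 : ∀ (c : k) x y z, t x (c • y) z = c • t x y z :=
    fun c x y z => (hL.lin₂ x z).map_smul c y
  have tadd3 : ∀ x y z z', t x y (z + z') = t x y z + t x y z' :=
    fun x y z z' => (hL.lin₃ x y).map_add z z'
  have tsmul3 : ∀ (c : k) x y z, t x y (c • z) = c • t x y z :=
    fun c x y z => (hL.lin₃ x y).map_smul c z
  have θadd1 : ∀ x x' y (z : L'), θ (x + x') y z = θ x y z + θ x' y z := by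
    intro x x' y z; rw [(hθ.linθ₁ y).map_add, LinearMap.add_apply]
  have θsmul1 : ∀ (c : k) x y (z : L'), θ (c • x) y z = c • θ x y z := by
    intro c x y z; rw [(hθ.linθ₁ y).map_smul, LinearMap.smul_apply]
  have θadd2 : ∀ x y y' (z : L'), θ x (y + y') z = θ x y z + θ x y' z := by
    intro x y y' z; rw [(hθ.linθ₂ x).map_add, LinearMap.add_apply]
  have θsmul2 : ∀ (c : k) x y (z : L'), θ x (c • y) z = c • θ x y z := by
    intro c x y z; rw [(hθ.linθ₂ x).map_smul, LinearMap.smul_apply]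
  constructor
  · intro H
    have key : ∀ u v w : L',
        (t (T u) (T v) (T₁ w) + t (T u) (T₁ v) (T w) + t (T₁ u) (T v) (T w)
          - (T₁ (θ (T v) (T u) w - θ (T u) (T v) w + t' u v w)
            + T (θ (T v) (T₁ u) w - θ (T₁ u) (T v) w
                + (θ (T₁ v) (T u) w - θ (T u) (T₁ v) w)))) = 0 ∧
        (t (T u) (T₁ v) (T₁ w) + t (T₁ u) (T v) (T₁ w) + t (T₁ u) (T₁ v) (T w)
          - (T (θ (T₁ v) (T₁ u) w - θ (T₁ u) (T₁ v) w)
            + T₁ (θ (T v) (T₁ u) w - θ (T₁ u) (T v) w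
                + (θ (T₁ v) (T u) w - θ (T u) (T₁ v) w)))) = 0 ∧
        (t (T₁ u) (T₁ v) (T₁ w) - T₁ (θ (T₁ v) (T₁ u) w - θ (T₁ u) (T₁ v) w)) = 0 := by
      intro u v w
      apply cubic_coeffs_zero (k := k)
      intro c
      have hc := H c u v w
      have h0 := hT u v w
      simp only [LinearMap.add_apply, LinearMap.smul_apply, θadd1, θsmul1, θadd2, θsmul2,
        tadd1, tsmul1, tadd2, tsmul2, tadd3, tsmul3, map_add, map_sub, map_smul,
        smul_add, smul_sub] at hc h0 ⊢
      linear_combination (norm := module) hc - h0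
    refine ⟨fun u v w => ?_, fun u v w => ?_, fun u v w => ?_⟩
    · linear_combination (norm := module) (key u v w).1
    · linear_combination (norm := module) (key u v w).2.1
    · linear_combination (norm := module) (key u v w).2.2
  · rintro ⟨h1, h2, h3⟩ c u v w
    have e0 := hT u v w
    have e1 := h1 u v w
    have e2 := h2 u v w
    have e3 := h3 u v w
    show t ((T + c • T₁) u) ((T + c • T₁) v) ((T + c • T₁) w)
        = (T + c • T₁) (θ ((T + c • T₁) v) ((T + c • T₁) u) w
            - θ ((T + c • T₁) u) ((T + c • T₁) v) w + t' u v w)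
    simp only [LinearMap.add_apply, LinearMap.smul_apply, θadd1, θsmul1, θadd2, θsmul2,
      tadd1, tsmul1, tadd2, tsmul2, tadd3, tsmul3, map_add, map_sub, map_smul,
      smul_add, smul_sub] at e0 e1 e2 e3 ⊢
    linear_combination (norm := module) e0 + c • e1 + (c * c) • e2 + (c * c * c) • e3
end

section
/- Let T: 𝕃' → 𝕃 be a nonabelian embedding tensor from a Lie triple system (𝕃',[·,·,·]') to a Lie triple system (𝕃,[·,·,·]) with respect to a coherent action θ, and suppose T₁: 𝕃' → 𝕃 generates an infinitesimal deformation of T, i.e. T + tT₁ is a nonabelian embedding tensor for every t ∈ k. Then (a) T₁ is a 1-cocycle of T: for all u,v,w ∈ 𝕃', -T₁([u,v,w]_T) + [Tu,Tv,T₁(w)] + [Tu,T₁(v),Tw] - T(D_θ(Tu,T₁(v))w) + [T₁(u),Tv,Tw] - T(D_θ(T₁(u),Tv)w) = 0; and (b) [T₁u,T₁v,T₁w] = T₁(D_θ(T₁u,T₁v)w) for all u,v,w ∈ 𝕃' (T₁ is an embedding tensor on 𝕃 with respect to the representation (𝕃',θ)). -/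
section Aux
variable {k L L' : Type*} [Field k] [AddCommGroup L] [Module k L]
    [AddCommGroup L'] [Module k L']

private lemma cubic_coeffs' [CharZero k] (a0 a1 a2 a3 : L)
    (h : ∀ c : k, a0 + c • a1 + c ^ 2 • a2 + c ^ 3 • a3 = 0) :
    a1 = 0 ∧ a3 = 0 := by
  have h1 := h 1
  have h1' := h (-1)
  have h2 := h 2
  have h2' := h (-2)
  constructor
  · linear_combination (norm := module) ((2:k)/3) • h1 - ((2:k)/3) • h1'
      - ((1:k)/12) • h2 + ((1:k)/12) • h2'
  · linear_combination (norm := module) ((1:k)/12) • h2 - ((1:k)/12) • h2'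
      - ((1:k)/6) • h1 + ((1:k)/6) • h1'

private lemma lts_expand' {t : L → L → L → L}
    (h1 : ∀ y z, IsLinearMap k fun x => t x y z)
    (h2 : ∀ x z, IsLinearMap k fun y => t x y z)
    (h3 : ∀ x y, IsLinearMap k fun z => t x y z)
    (A A' B B' C C' : L) (c : k) :
    t (A + c • A') (B + c • B') (C + c • C')
      = t A B C + c • (t A' B C + t A B' C + t A B C')
        + c ^ 2 • (t A' B' C + t A' B C' + t A B' C')
        + c ^ 3 • t A' B' C' := by
  rw [(h1 _ _).map_add, (h1 _ _).map_smul, (h2 _ _).map_add, (h2 _ _).map_smul,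
    (h2 _ _).map_add, (h2 _ _).map_smul, (h3 _ _).map_add, (h3 _ _).map_smul,
    (h3 _ _).map_add, (h3 _ _).map_smul, (h3 _ _).map_add, (h3 _ _).map_smul,
    (h3 _ _).map_add, (h3 _ _).map_smul]
  module

private lemma theta_expand' {θ : L → L → L' →ₗ[k] L'}
    (h1 : ∀ y, IsLinearMap k fun x => θ x y)
    (h2 : ∀ x, IsLinearMap k fun y => θ x y)
    (A A' B B' : L) (w : L') (c : k) :
    θ (A + c • A') (B + c • B') w
      = θ A B w + c • (θ A' B w + θ A B' w) + c ^ 2 • θ A' B' w := by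
  rw [(h1 _).map_add, (h1 _).map_smul, (h2 _).map_add, (h2 _).map_smul,
    (h2 _).map_add, (h2 _).map_smul]
  simp only [LinearMap.add_apply, LinearMap.smul_apply]
  module

end Aux


/-- if `T₁` generates an infinitesimal deformation of the nonabelian
embedding tensor `T` (i.e. `T + tT₁` is a nonabelian embedding tensor for all `t`),
then (a) `T₁` is a 1-cocycle of `T`, and (b) `T₁` is an embedding tensor:
`[T₁u,T₁v,T₁w] = T₁(D_θ(T₁u,T₁v)w)`. -/
theorem infinitesimal_deformation_cocycle {k L L' : Type*} [Field k] [CharZero k]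
    [AddCommGroup L] [Module k L] [AddCommGroup L'] [Module k L']
    (t : L → L → L → L) (t' : L' → L' → L' → L') (θ : L → L → L' →ₗ[k] L')
    (hL : IsLTS k t) (hL' : IsLTS k t') (hθ : IsCoherentAction k t t' θ)
    (T : L' →ₗ[k] L) (hT : IsNET k t t' θ T) (T₁ : L' →ₗ[k] L)
    (hdef : ∀ c : k, IsNET k t t' θ (T + c • T₁)) :
    (∀ u v w : L',
      -T₁ (θ (T v) (T u) w - θ (T u) (T v) w + t' u v w)
        + t (T u) (T v) (T₁ w)
        + t (T u) (T₁ v) (T w) - T (θ (T₁ v) (T u) w - θ (T u) (T₁ v) w)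
        + t (T₁ u) (T v) (T w) - T (θ (T v) (T₁ u) w - θ (T₁ u) (T v) w) = 0) ∧
    (∀ u v w : L',
      t (T₁ u) (T₁ v) (T₁ w) = T₁ (θ (T₁ v) (T₁ u) w - θ (T₁ u) (T₁ v) w)) := by
  have lin1 := hL.lin₁
  have lin2 := hL.lin₂
  have lin3 := hL.lin₃
  have lth1 := hθ.linθ₁
  have lth2 := hθ.linθ₂
  have main : ∀ u v w : L',
      ((t (T₁ u) (T v) (T w) + t (T u) (T₁ v) (T w) + t (T u) (T v) (T₁ w))
          - (T (θ (T₁ v) (T u) w) + T (θ (T v) (T₁ u) w)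
              - (T (θ (T₁ u) (T v) w) + T (θ (T u) (T₁ v) w))
              + (T₁ (θ (T v) (T u) w) - T₁ (θ (T u) (T v) w) + T₁ (t' u v w))))
        = 0 ∧
      t (T₁ u) (T₁ v) (T₁ w) - T₁ (θ (T₁ v) (T₁ u) w - θ (T₁ u) (T₁ v) w) = 0 := by
    intro u v w
    have key : ∀ c : k,
        (t (T u) (T v) (T w)
            - (T (θ (T v) (T u) w) - T (θ (T u) (T v) w) + T (t' u v w)))
        + c • ((t (T₁ u) (T v) (T w) + t (T u) (T₁ v) (T w) + t (T u) (T v) (T₁ w))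
            - (T (θ (T₁ v) (T u) w) + T (θ (T v) (T₁ u) w)
                - (T (θ (T₁ u) (T v) w) + T (θ (T u) (T₁ v) w))
                + (T₁ (θ (T v) (T u) w) - T₁ (θ (T u) (T v) w) + T₁ (t' u v w))))
        + c ^ 2 • ((t (T₁ u) (T₁ v) (T w) + t (T₁ u) (T v) (T₁ w) + t (T u) (T₁ v) (T₁ w))
            - (T (θ (T₁ v) (T₁ u) w) - T (θ (T₁ u) (T₁ v) w)
                + (T₁ (θ (T₁ v) (T u) w) + T₁ (θ (T v) (T₁ u) w)
                    - (T₁ (θ (T₁ u) (T v) w) + T₁ (θ (T u) (T₁ v) w)))))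
        + c ^ 3 • (t (T₁ u) (T₁ v) (T₁ w)
            - (T₁ (θ (T₁ v) (T₁ u) w) - T₁ (θ (T₁ u) (T₁ v) w))) = 0 := by
      intro c
      have h := hdef c u v w
      simp only [LinearMap.add_apply, LinearMap.smul_apply] at h
      rw [lts_expand' lin1 lin2 lin3, theta_expand' lth1 lth2,
        theta_expand' lth1 lth2] at h
      simp only [map_add, map_sub, map_smul] at h
      linear_combination (norm := module) h
    have hc := cubic_coeffs' _ _ _ _ key
    refine ⟨hc.1, ?_⟩
    have h3 := hc.2
    simp only [map_sub] at h3 ⊢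
    linear_combination (norm := module) h3
  constructor
  · intro u v w
    have h := (main u v w).1
    simp only [map_add, map_sub] at h ⊢
    linear_combination (norm := module) h
  · intro u v w
    have h := (main u v w).2
    simp only [map_sub] at h ⊢
    linear_combination (norm := module) h
end

section
/- Let (L,[·,·]) and (L',[·,·]') be Lie algebras over a field k of characteristic 0, and let ρ: L → End(L') be a coherent action of L on L': each ρ(x) is a derivation of L', ρ([x,y]) = ρ(x)∘ρ(y) - ρ(y)∘ρ(x), and [ρ(x)u,v]' = 0 for all x ∈ L, u,v ∈ L'. Define θ_ρ(x,y)u := ρ(y)(ρ(x)u). Then θ_ρ is a coherent action of the Lie triple system (L,[x,y,z] := [[x,y],z]) on the Lie triple system (L',[u,v,w]' := [[u,v]',w]'): θ_ρ satisfies the two LTS-representation identities for these triple brackets, θ_ρ(x,y)u lies in the center of the LTS L', θ_ρ(x,y) annihilates all triple brackets [[u,v]',w]', and each θ_ρ(x,y) is a derivation of the triple bracket on L'. -/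
/-- a coherent action `ρ` of a Lie algebra `L` on a Lie algebra `L'`
induces a coherent action `θ_ρ(x,y)u := ρ(y)(ρ(x)u)` of the Lie triple system
`(L, [[x,y],z])` on the Lie triple system `(L', [[u,v]',w]')`. -/
theorem coherent_lie_action_gives_lts_action {k L L' : Type*} [Field k] [CharZero k]
    [LieRing L] [LieAlgebra k L] [LieRing L'] [LieAlgebra k L']
    (ρ : L →ₗ[k] L' →ₗ[k] L')
    (hder : ∀ (x : L) (u v : L'), ρ x ⁅u, v⁆ = ⁅ρ x u, v⁆ + ⁅u, ρ x v⁆)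
    (hhom : ∀ (x y : L) (u : L'), ρ ⁅x, y⁆ u = ρ x (ρ y u) - ρ y (ρ x u))
    (hcoh : ∀ (x : L) (u v : L'), ⁅ρ x u, v⁆ = 0)
    (θ : L → L → L' →ₗ[k] L')
    (hθ : ∀ (x y : L) (u : L'), θ x y u = ρ y (ρ x u)) :
    IsCoherentAction k (fun x y z : L => ⁅⁅x, y⁆, z⁆)
      (fun u v w : L' => ⁅⁅u, v⁆, w⁆) θ := by
  have hz' : ∀ (x : L) (u v : L'), ⁅u, ρ x v⁆ = 0 := by
    intro x u v
    rw [← lie_skew, hcoh, neg_zero]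
  have hz : ∀ (x : L) (u v : L'), ρ x ⁅u, v⁆ = 0 := by
    intro x u v
    rw [hder, hcoh, hz', add_zero]
  refine ⟨⟨?_, ?_, ?_, ?_⟩, ?_, ?_, ?_⟩
  · intro y
    constructor
    · intro x x'; ext u; simp [hθ, map_add]
    · intro c x; ext u; simp [hθ, map_smul]
  · intro x
    constructor
    · intro y y'; ext u; simp [hθ, map_add]
    · intro c y; ext u; simp [hθ, map_smul]
  · intro a b x y u
    simp only [hθ, hhom, map_sub]
    abel
  · intro a b x y u
    simp only [hθ, hhom, map_sub]
    abel
  · intro x y u v w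
    rw [hθ, hcoh, zero_lie]
  · intro x y u v w
    rw [hθ, hz, map_zero]
  · intro x y u v w
    rw [hθ, hz, map_zero, hθ, hcoh, zero_lie, hθ, hz', zero_lie, hθ, hz']
    simp
end

section
/- Let (L,[·,·]) and (L',[·,·]') be Lie algebras over a field k of characteristic 0, let ρ be a coherent action of L on L' (each ρ(x) ∈ Der(L'), ρ([x,y]) = ρ(x)ρ(y) - ρ(y)ρ(x), and [ρ(x)u,v]' = 0), and let T: L' → L be a nonabelian embedding tensor of Lie algebras, i.e. [Tu,Tv] = T(ρ(Tu)v + [u,v]') for all u,v ∈ L'. Then T is a nonabelian embedding tensor from the Lie triple system (L',[u,v,w]' := [[u,v]',w]') to the Lie triple system (L,[x,y,z] := [[x,y],z]) with respect to the coherent action θ_ρ(x,y)u := ρ(y)(ρ(x)u); explicitly, [[Tu,Tv],Tw] = T(ρ(Tu)(ρ(Tv)w) - ρ(Tv)(ρ(Tu)w) + [[u,v]',w]') for all u,v,w ∈ L'. -/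
/-- a nonabelian embedding tensor `T` of Lie algebras (with respect to a
coherent Lie algebra action `ρ`) is a nonabelian embedding tensor between the induced
Lie triple systems, with respect to the coherent action `θ_ρ(x,y)u := ρ(y)(ρ(x)u)`;
explicitly, `[[Tu,Tv],Tw] = T(ρ(Tu)(ρ(Tv)w) - ρ(Tv)(ρ(Tu)w) + [[u,v]',w]')`. -/
theorem lie_net_gives_lts_net {k L L' : Type*} [Field k] [CharZero k]
    [LieRing L] [LieAlgebra k L] [LieRing L'] [LieAlgebra k L']
    (ρ : L →ₗ[k] L' →ₗ[k] L')
    (hder : ∀ (x : L) (u v : L'), ρ x ⁅u, v⁆ = ⁅ρ x u, v⁆ + ⁅u, ρ x v⁆)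
    (hhom : ∀ (x y : L) (u : L'), ρ ⁅x, y⁆ u = ρ x (ρ y u) - ρ y (ρ x u))
    (hcoh : ∀ (x : L) (u v : L'), ⁅ρ x u, v⁆ = 0)
    (T : L' →ₗ[k] L)
    (hT : ∀ u v : L', ⁅T u, T v⁆ = T (ρ (T u) v + ⁅u, v⁆))
    (θ : L → L → L' →ₗ[k] L')
    (hθ : ∀ (x y : L) (u : L'), θ x y u = ρ y (ρ x u)) :
    IsNET k (fun x y z : L => ⁅⁅x, y⁆, z⁆) (fun u v w : L' => ⁅⁅u, v⁆, w⁆) θ T ∧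
    ∀ u v w : L',
      ⁅⁅T u, T v⁆, T w⁆
        = T (ρ (T u) (ρ (T v) w) - ρ (T v) (ρ (T u) w) + ⁅⁅u, v⁆, w⁆) := by
  
  have key : ∀ u v w : L',
      ⁅⁅T u, T v⁆, T w⁆
        = T (ρ (T u) (ρ (T v) w) - ρ (T v) (ρ (T u) w) + ⁅⁅u, v⁆, w⁆) := by
    intro u v w
    have h1 : ⁅⁅T u, T v⁆, T w⁆
        = T (ρ ⁅T u, T v⁆ w + ⁅ρ (T u) v + ⁅u, v⁆, w⁆) := by
      conv_lhs => rw [hT u v, hT (ρ (T u) v + ⁅u, v⁆) w, ← hT u v]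
    rw [h1, hhom, add_lie, hcoh, zero_add]
  refine ⟨fun u v w => ?_, key⟩
  simp only [hθ]
  rw [key u v w]
end
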